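/- arXiv:1003.4148 — 2 statements merged into one kernel-verified Lean document; each statement's English description precedes it below -/
import Mathlib

section
/- With the linear regression model Y_j = aX_j + b + e_j, X_j = jΔ, e_j i.i.d. N(0,σ²), the filtered derivative of the slope D_3(k,A) = â(k,A) − â(k−A,A) is, under the null hypothesis of no change, a centered Gaussian random variable with variance Var[D_3(k,A)] = 24σ²/(Δ²·A·(A²−1)), independent of k; hence (D_3(k,A))_k is a centered stationary Gaussian sequence. -/
/-!
On a box of `A` consecutive design points the least-squares slope of `Y = aX + b + e` equals
`a + ∑ wⱼ eⱼ` for deterministic weights with `∑ wⱼ² = A / D`, where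
`D = A ∑ Xⱼ² - (∑ Xⱼ)² = Δ²A²(A² - 1)/12` does not depend on where the box sits.
The boxes `(k - A, k]` and `(k, k + A]` are disjoint, so `â(k, A)` and `â(k - A, A)` are
independent Gaussians of variance `σ²A / D` each, and their difference is a centered Gaussian
of variance `2σ²A / D = 24σ² / (Δ²A(A² - 1))`.
-/

open MeasureTheory ProbabilityTheory NNReal Finset

namespace ProbabilityTheory

variable {Ω ι : Type*} [MeasurableSpace Ω] {P : Measure Ω} {e : ι → Ω → ℝ}

lemma iIndepFun.hasLaw_sum_mul_gaussianReal [IsProbabilityMeasure P] {μ : ι → ℝ} {v : ι → ℝ≥0}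
    (hlaw : ∀ j, HasLaw (e j) (gaussianReal (μ j) (v j)) P) (hindep : iIndepFun e P)
    (c : ι → ℝ) (s : Finset ι) :
    HasLaw (fun ω ↦ ∑ j ∈ s, c j * e j ω)
      (gaussianReal (∑ j ∈ s, c j * μ j) (∑ j ∈ s, (c j ^ 2).toNNReal * v j)) P := by
  classical
  induction s using Finset.cons_induction with
  | empty => exact ⟨aemeasurable_const, by simp [gaussianReal_zero_var]⟩
  | cons i s hi ih =>
    have hind : IndepFun (fun ω ↦ c i * e i ω) (fun ω ↦ ∑ j ∈ s, c j * e j ω) P := by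
      have := (hindep.comp₀ (fun j x ↦ c j * x) (fun j ↦ (hlaw j).aemeasurable)
        (fun j ↦ (measurable_const_mul _).aemeasurable)).indepFun_finsetSum_of_notMem₀
          (fun j ↦ (hlaw j).aemeasurable.const_mul _) hi
      convert this.symm using 2 with ω
      · rfl
      · rw [Finset.sum_apply]
        rfl
    simp only [Finset.sum_cons]
    rw [Real.toNNReal_of_nonneg (sq_nonneg (c i))]
    exact ⟨((hlaw i).aemeasurable.const_mul _).add ih.aemeasurable,
      gaussianReal_add_gaussianReal_of_indepFun hind
        (gaussianReal_const_mul (hlaw i) (c i)).map_eq ih.map_eq⟩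

lemma iIndepFun.indepFun_sum_mul_of_disjoint (hindep : iIndepFun e P)
    (hmeas : ∀ j, AEMeasurable (e j) P) {s t : Finset ι} (hst : Disjoint s t) (c d : ι → ℝ) :
    IndepFun (fun ω ↦ ∑ j ∈ s, c j * e j ω) (fun ω ↦ ∑ j ∈ t, d j * e j ω) P := by
  have := (hindep.indepFun_finset₀ s t hst hmeas).comp
    (φ := fun y : s → ℝ ↦ ∑ j : s, c j * y j) (ψ := fun y : t → ℝ ↦ ∑ j : t, d j * y j)
    (by fun_prop) (by fun_prop)
  simpa [Function.comp_def, ← Finset.sum_coe_sort s, ← Finset.sum_coe_sort t] using this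

end ProbabilityTheory

section LeastSquares

variable {ι : Type*} (s : Finset ι)

def olsDenom (x : ι → ℝ) : ℝ := #s * ∑ j ∈ s, x j ^ 2 - (∑ j ∈ s, x j) ^ 2

noncomputable def olsSlope (x y : ι → ℝ) : ℝ :=
  (#s * ∑ j ∈ s, x j * y j - (∑ j ∈ s, x j) * ∑ j ∈ s, y j) / olsDenom s x

noncomputable def olsWeight (x : ι → ℝ) (j : ι) : ℝ :=
  (#s * x j - ∑ i ∈ s, x i) / olsDenom s x

lemma olsSlope_mul_add_add {x : ι → ℝ} (hx : olsDenom s x ≠ 0) (a b : ℝ) (e : ι → ℝ) :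
    olsSlope s x (fun j ↦ a * x j + b + e j) = a + ∑ j ∈ s, olsWeight s x j * e j := by
  have hxy : ∑ j ∈ s, x j * (a * x j + b + e j)
      = a * ∑ j ∈ s, x j ^ 2 + b * ∑ j ∈ s, x j + ∑ j ∈ s, x j * e j := by
    simp only [Finset.mul_sum, ← Finset.sum_add_distrib]
    exact Finset.sum_congr rfl fun j _ ↦ by ring
  have hy : ∑ j ∈ s, (a * x j + b + e j) = a * ∑ j ∈ s, x j + #s * b + ∑ j ∈ s, e j := by
    simp [Finset.sum_add_distrib, Finset.mul_sum]
  have hw : ∑ j ∈ s, olsWeight s x j * e j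
      = (#s * ∑ j ∈ s, x j * e j - (∑ j ∈ s, x j) * ∑ j ∈ s, e j) / olsDenom s x := by
    simp only [olsWeight, div_mul_eq_mul_div, ← Finset.sum_div, sub_mul, Finset.sum_sub_distrib,
      Finset.sum_mul, Finset.mul_sum, mul_assoc]
  rw [olsSlope, hxy, hy, hw]
  field_simp
  rw [olsDenom]
  ring

lemma sum_olsWeight_sq (x : ι → ℝ) : ∑ j ∈ s, olsWeight s x j ^ 2 = #s / olsDenom s x := by
  have hnum : ∑ j ∈ s, (#s * x j - ∑ i ∈ s, x i) ^ 2 = #s * olsDenom s x := by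
    simp only [sub_sq, Finset.sum_add_distrib, Finset.sum_sub_distrib, mul_pow, ← Finset.mul_sum,
      ← Finset.sum_mul, Finset.sum_const, nsmul_eq_mul, olsDenom]
    ring
  rcases eq_or_ne (olsDenom s x) 0 with h | h
  · simp [olsWeight, h]
  · simp only [olsWeight, div_pow, ← Finset.sum_div, hnum]
    field_simp

end LeastSquares

lemma sum_Ioc_add_natCast (m A : ℕ) :
    ∑ j ∈ Ioc m (m + A), (j : ℝ) = A * m + A * (A + 1) / 2 := by
  induction A with
  | zero => simp
  | succ A ih => rw [← add_assoc, Finset.sum_Ioc_succ_top (by omega), ih]; push_cast; ring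

lemma sum_Ioc_add_natCast_sq (m A : ℕ) :
    ∑ j ∈ Ioc m (m + A), (j : ℝ) ^ 2
      = A * m ^ 2 + A * (A + 1) * m + A * (A + 1) * (2 * A + 1) / 6 := by
  induction A with
  | zero => simp
  | succ A ih => rw [← add_assoc, Finset.sum_Ioc_succ_top (by omega), ih]; push_cast; ring

lemma olsDenom_Ioc_add_natCast_mul (m A : ℕ) (Δ : ℝ) :
    olsDenom (Ioc m (m + A)) (fun j ↦ (j : ℝ) * Δ) = Δ ^ 2 * A ^ 2 * (A ^ 2 - 1) / 12 := by
  simp only [olsDenom, Nat.card_Ioc, add_tsub_cancel_left, mul_pow, ← Finset.sum_mul,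
    sum_Ioc_add_natCast, sum_Ioc_add_natCast_sq]
  ring

lemma sum_olsWeight_Ioc_add_natCast_mul_sq (m A : ℕ) (Δ : ℝ) :
    ∑ j ∈ Ioc m (m + A), olsWeight (Ioc m (m + A)) (fun j ↦ (j : ℝ) * Δ) j ^ 2
      = 12 / (Δ ^ 2 * A * (A ^ 2 - 1)) := by
  rw [sum_olsWeight_sq, olsDenom_Ioc_add_natCast_mul, Nat.card_Ioc, add_tsub_cancel_left]
  rcases eq_or_ne (A : ℝ) 0 with hA | hA
  · simp [hA]
  · rw [div_div_eq_mul_div, show Δ ^ 2 * A ^ 2 * (A ^ 2 - 1) = A * (Δ ^ 2 * A * (A ^ 2 - 1)) by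
      ring, mul_div_mul_left _ _ hA, mul_comm]

theorem filteredDerivative_slope_gaussian_general {Ω : Type*} [MeasurableSpace Ω]
    (P : Measure Ω) [IsProbabilityMeasure P]
    (a b : ℝ) (Δ : ℝ≥0) (hΔ : 0 < Δ) (σ : ℝ≥0)
    (e : ℕ → Ω → ℝ) (hmeas : ∀ j, Measurable (e j))
    (hdist : ∀ j, Measure.map (e j) P = gaussianReal 0 (σ ^ 2))
    (hindep : iIndepFun e P)
    (X : ℕ → ℝ) (hX : ∀ j, X j = (j : ℝ) * (Δ : ℝ))
    (Y : ℕ → Ω → ℝ) (hY : ∀ j ω, Y j ω = a * X j + b + e j ω)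
    (A k : ℕ) (hA : 2 ≤ A) (hk : A ≤ k)
    (ahat : ℕ → Ω → ℝ)
    (hahat : ∀ (m : ℕ) (ω : Ω), ahat m ω =
      ((A : ℝ) * ∑ j ∈ Finset.Ioc m (m + A), X j * Y j ω
          - (∑ j ∈ Finset.Ioc m (m + A), X j) * ∑ j ∈ Finset.Ioc m (m + A), Y j ω) /
        ((A : ℝ) * ∑ j ∈ Finset.Ioc m (m + A), (X j) ^ 2
          - (∑ j ∈ Finset.Ioc m (m + A), X j) ^ 2)) :
    Measure.map (fun ω => ahat k ω - ahat (k - A) ω) P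
      = gaussianReal 0 (24 * σ ^ 2 / (Δ ^ 2 * (A : ℝ≥0) * (((A ^ 2 - 1 : ℕ)) : ℝ≥0))) := by
  have hD : ∀ m, olsDenom (Ioc m (m + A)) X = (Δ : ℝ) ^ 2 * A ^ 2 * (A ^ 2 - 1) / 12 :=
    fun m ↦ by rw [funext hX]; exact olsDenom_Ioc_add_natCast_mul m A Δ
  have hD0 : (Δ : ℝ) ^ 2 * A ^ 2 * (A ^ 2 - 1) / 12 ≠ 0 := by
    have : (2 : ℝ) ≤ A := by exact_mod_cast hA
    have : (0 : ℝ) < A ^ 2 - 1 := by nlinarith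
    positivity
  have hslope : ∀ m ω,
      ahat m ω = a + ∑ j ∈ Ioc m (m + A), olsWeight (Ioc m (m + A)) X j * e j ω := fun m ω ↦ by
    rw [← olsSlope_mul_add_add _ (hD m ▸ hD0) a b, hahat]
    simp only [olsSlope, olsDenom, Nat.card_Ioc, add_tsub_cancel_left, hY]
  have hdisj : Disjoint (Ioc k (k + A)) (Ioc (k - A) (k - A + A)) := by
    rw [Finset.disjoint_left]; intro j; simp only [Finset.mem_Ioc]; omega
  have hlaw j : HasLaw (e j) (gaussianReal 0 (σ ^ 2)) P := ⟨(hmeas j).aemeasurable, hdist j⟩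
  have hdiff : (fun ω ↦ ahat k ω - ahat (k - A) ω)
      = (fun ω ↦ ∑ j ∈ Ioc k (k + A), olsWeight (Ioc k (k + A)) X j * e j ω)
        + fun ω ↦ ∑ j ∈ Ioc (k - A) (k - A + A),
            -olsWeight (Ioc (k - A) (k - A + A)) X j * e j ω := by
    ext ω; simp only [hslope, Pi.add_apply, neg_mul, Finset.sum_neg_distrib]; ring
  rw [hdiff, gaussianReal_add_gaussianReal_of_indepFun
    (hindep.indepFun_sum_mul_of_disjoint (fun j ↦ (hlaw j).aemeasurable) hdisj _ _)
    (hindep.hasLaw_sum_mul_gaussianReal hlaw _ _).map_eq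
    (hindep.hasLaw_sum_mul_gaussianReal hlaw _ _).map_eq]
  congr 1
  · simp
  · apply NNReal.eq
    simp only [NNReal.coe_add, NNReal.coe_sum, NNReal.coe_mul, Real.coe_toNNReal _ (sq_nonneg _),
      NNReal.coe_div, NNReal.coe_pow, NNReal.coe_ofNat, NNReal.coe_natCast, neg_sq,
      ← Finset.sum_mul, funext hX, sum_olsWeight_Ioc_add_natCast_mul_sq,
      Nat.cast_sub (Nat.one_le_pow 2 A (by omega)), Nat.cast_pow, Nat.cast_one]
    field_simp
    ring

/-- In the linear regression model `Y_j = aX_j + b + e_j`, `X_j = jΔ`, with i.i.d. `N(0,σ²)`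
errors, the filtered derivative of the slope `D₃(k,A) = â(k,A) − â(k−A,A)` is, under the null
hypothesis of no change, a centered Gaussian random variable with variance
`24σ²/(Δ²·A·(A²−1))`, independent of `k`. -/
theorem filteredDerivative_slope_gaussian {Ω : Type*} [MeasurableSpace Ω]
    (P : Measure Ω) [IsProbabilityMeasure P]
    (a b : ℝ) (Δ : ℝ≥0) (hΔ : 0 < Δ) (σ : ℝ≥0) (hσ : 0 < σ)
    (e : ℕ → Ω → ℝ) (hmeas : ∀ j, Measurable (e j))
    (hdist : ∀ j, Measure.map (e j) P = gaussianReal 0 (σ ^ 2))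
    (hindep : iIndepFun e P)
    (X : ℕ → ℝ) (hX : ∀ j, X j = (j : ℝ) * (Δ : ℝ))
    (Y : ℕ → Ω → ℝ) (hY : ∀ j ω, Y j ω = a * X j + b + e j ω)
    (n A k : ℕ) (hA : 2 ≤ A) (hk : A ≤ k) (hkn : k + A ≤ n)
    (ahat : ℕ → Ω → ℝ)
    (hahat : ∀ (m : ℕ) (ω : Ω), ahat m ω =
      ((A : ℝ) * ∑ j ∈ Finset.Ioc m (m + A), X j * Y j ω
          - (∑ j ∈ Finset.Ioc m (m + A), X j) * ∑ j ∈ Finset.Ioc m (m + A), Y j ω) /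
        ((A : ℝ) * ∑ j ∈ Finset.Ioc m (m + A), (X j) ^ 2
          - (∑ j ∈ Finset.Ioc m (m + A), X j) ^ 2)) :
    Measure.map (fun ω => ahat k ω - ahat (k - A) ω) P
      = gaussianReal 0 (24 * σ ^ 2 / (Δ ^ 2 * (A : ℝ≥0) * (((A ^ 2 - 1 : ℕ)) : ℝ≥0))) :=
  filteredDerivative_slope_gaussian_general P a b Δ hΔ σ e hmeas hdist hindep X hX Y hY A k hA hk
    ahat hahat
end

section
/- Suppose a_n is a sequence of nonnegative random variables with lim P(a_n ≤ c_n(x)) = exp(−2e^{−x}) for all x, and suppose σ̂_n is an estimator of σ > 0 with |σ − σ̂_n|·log n → 0 in probability. Then lim_{n→∞} P(a_n ≤ (σ̂_n/σ)·c_n(x)) = exp(−2e^{−x}) for all x. (This yields the filtered-derivative extreme-value limit with estimated variance.) -/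
/-!
Since `c_n` is affine in `x` with slope `1 / √(2 log n)`, the random threshold is again of the
form `(σ̂_n / σ) c_n(x) = c_n(x + η_n)` with `η_n = (σ̂_n / σ - 1) c_n(x) √(2 log n)`, and
`|η_n| ≤ (5 / σ) |σ - σ̂_n| log n` for large `n`, so `η_n → 0` in probability. A threshold
`g_n(x + η_n)`, with `g_n` monotone and `η_n → 0` in probability, is squeezed between
`g_n(x ± δ)` off the event `|η_n| ≥ δ`; continuity of the limit law in `x` then gives the
result.
-/

open MeasureTheory Filter

/-- The Darling–Erdős type normalization `c_n(x)`. -/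
noncomputable def cDE (n : ℕ) (x : ℝ) : ℝ :=
  (x + 2 * Real.log n + (1 / 2) * Real.log (Real.log n) - (1 / 2) * Real.log Real.pi) /
    Real.sqrt (2 * Real.log n)

open Topology

section Perturbation

variable {Ω ι : Type*} [MeasurableSpace Ω] {μ : Measure Ω} {l : Filter ι}

theorem tendstoInMeasure_zero_of_abs_le_mul {η ξ : ι → Ω → ℝ} {C : ℝ} (hC : 0 < C)
    (hξ : ∀ ε : ℝ, 0 < ε → Tendsto (fun i => μ {ω | ε ≤ ξ i ω}) l (𝓝 0))
    (hle : ∀ᶠ i in l, ∀ ω, |η i ω| ≤ C * ξ i ω) :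
    TendstoInMeasure μ η l 0 := by
  refine tendstoInMeasure_iff_dist.2 fun ε hε => ?_
  refine tendsto_of_tendsto_of_tendsto_of_le_of_le' tendsto_const_nhds
    (hξ (ε / C) (by positivity)) (Eventually.of_forall fun _ => zero_le) ?_
  filter_upwards [hle] with i hi
  refine measure_mono fun ω hω => ?_
  simp only [Set.mem_ofPred_eq, Pi.zero_apply, Real.dist_eq, sub_zero] at hω ⊢
  rw [div_le_iff₀' hC]
  exact hω.trans (hi ω)

variable [IsFiniteMeasure μ] {x : ℝ}

theorem measureReal_le_comp_add_le {a η : Ω → ℝ} {g : ℝ → ℝ} {δ : ℝ}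
    (hg : Monotone g) :
    μ.real {ω | a ω ≤ g (x + η ω)} ≤
      μ.real {ω | a ω ≤ g (x + δ)} + μ.real {ω | δ ≤ dist (η ω) 0} := by
  refine (measureReal_mono fun ω hω => ?_).trans (measureReal_union_le _ _)
  by_cases hηδ : δ ≤ dist (η ω) 0
  · exact Or.inr hηδ
  · rw [Real.dist_eq, sub_zero, not_le] at hηδ
    exact Or.inl (le_trans hω (hg (by linarith [le_abs_self (η ω)])))

theorem measureReal_le_sub_le_comp_add {a η : Ω → ℝ} {g : ℝ → ℝ} {δ : ℝ}
    (hg : Monotone g) :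
    μ.real {ω | a ω ≤ g (x - δ)} - μ.real {ω | δ ≤ dist (η ω) 0} ≤
      μ.real {ω | a ω ≤ g (x + η ω)} := by
  refine sub_le_iff_le_add.2 <| (measureReal_mono fun ω hω => ?_).trans (measureReal_union_le _ _)
  by_cases hηδ : δ ≤ dist (η ω) 0
  · exact Or.inr hηδ
  · rw [Real.dist_eq, sub_zero, not_le] at hηδ
    exact Or.inl (le_trans hω (hg (by linarith [neg_abs_le (η ω)])))

theorem tendsto_measureReal_le_comp_add_of_tendstoInMeasure
    {a : ι → Ω → ℝ} {g : ι → ℝ → ℝ} (hg : ∀ i, Monotone (g i))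
    {F : ℝ → ℝ} (hF : ContinuousAt F x)
    (hlim : ∀ y, Tendsto (fun i => μ.real {ω | a i ω ≤ g i y}) l (𝓝 (F y)))
    {η : ι → Ω → ℝ} (hη : TendstoInMeasure μ η l 0) :
    Tendsto (fun i => μ.real {ω | a i ω ≤ g i (x + η i ω)}) l (𝓝 (F x)) := by
  have hbad := tendstoInMeasure_iff_measureReal_dist.1 hη
  refine tendsto_order.2 ⟨fun b hb => ?_, fun b hb => ?_⟩
  · obtain ⟨ε, hε, hFb⟩ := Metric.eventually_nhds_iff.1 (hF.eventually (lt_mem_nhds hb))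
    have hlower : b < F (x - ε / 2) := hFb (by simp [abs_of_pos hε, hε])
    have := ((hlim (x - ε / 2)).sub (hbad (ε / 2) (by positivity))).eventually
      (lt_mem_nhds (by simpa using hlower))
    filter_upwards [this] with i hi
    exact hi.trans_le (measureReal_le_sub_le_comp_add (hg i))
  · obtain ⟨ε, hε, hFb⟩ := Metric.eventually_nhds_iff.1 (hF.eventually (gt_mem_nhds hb))
    have hupper : F (x + ε / 2) < b := hFb (by simp [abs_of_pos hε, hε])
    have := ((hlim (x + ε / 2)).add (hbad (ε / 2) (by positivity))).eventually
      (gt_mem_nhds (by simpa using hupper))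
    filter_upwards [this] with i hi
    exact (measureReal_le_comp_add_le (hg i)).trans_lt hi

end Perturbation

theorem cDE_add (n : ℕ) (x y : ℝ) :
    cDE n (x + y) = cDE n x + y / Real.sqrt (2 * Real.log n) := by
  simp only [cDE]
  ring

theorem cDE_monotone (n : ℕ) : Monotone (cDE n) := fun x y hxy => by
  unfold cDE
  gcongr

theorem mul_cDE_eq_cDE_add {n : ℕ} (hn : 0 < Real.log n) (t x : ℝ) :
    t * cDE n x = cDE n (x + (t - 1) * (cDE n x * Real.sqrt (2 * Real.log n))) := by
  have hsqrt : Real.sqrt (2 * Real.log n) ≠ 0 := (Real.sqrt_pos.2 (by positivity)).ne'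
  rw [cDE_add]
  field_simp
  ring

theorem abs_cDE_mul_sqrt_le {n : ℕ} {x : ℝ} (hn : 1 ≤ Real.log n) (hx : |x| ≤ Real.log n) :
    |cDE n x * Real.sqrt (2 * Real.log n)| ≤ 5 * Real.log n := by
  have hsqrt : Real.sqrt (2 * Real.log n) ≠ 0 := (Real.sqrt_pos.2 (by positivity)).ne'
  rw [cDE, div_mul_cancel₀ _ hsqrt]
  have hloglog : |Real.log (Real.log n)| ≤ Real.log n := by
    rw [abs_of_nonneg (Real.log_nonneg hn)]
    exact (Real.log_le_sub_one_of_pos (by positivity)).trans (by linarith)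
  have hlogpi : |Real.log Real.pi| ≤ 3 := by
    rw [abs_of_pos (Real.log_pos (by linarith [Real.pi_gt_three]))]
    linarith [Real.log_le_sub_one_of_pos Real.pi_pos, Real.pi_lt_four]
  obtain ⟨hx₁, hx₂⟩ := abs_le.1 hx
  obtain ⟨hll₁, hll₂⟩ := abs_le.1 hloglog
  obtain ⟨hpi₁, hpi₂⟩ := abs_le.1 hlogpi
  exact abs_le.2 ⟨by linarith, by linarith⟩

theorem extreme_value_limit_estimated_variance_general {Ω : Type*} [MeasurableSpace Ω]
    (μ : Measure Ω) [IsProbabilityMeasure μ]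
    (a : ℕ → Ω → ℝ)
    (σ : ℝ) (hσ : 0 < σ) (σhat : ℕ → Ω → ℝ)
    (h1 : ∀ x : ℝ, Tendsto (fun n => (μ {ω | a n ω ≤ cDE n x}).toReal) atTop
      (nhds (Real.exp (-2 * Real.exp (-x)))))
    (h2 : ∀ ε : ℝ, 0 < ε →
      Tendsto (fun n => μ {ω | ε ≤ |σ - σhat n ω| * Real.log n}) atTop (nhds 0)) :
    ∀ x : ℝ, Tendsto (fun n => (μ {ω | a n ω ≤ (σhat n ω / σ) * cDE n x}).toReal) atTop
      (nhds (Real.exp (-2 * Real.exp (-x)))) := by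
  intro x
  have hlog : ∀ᶠ n : ℕ in atTop, max 1 |x| ≤ Real.log n :=
    (Real.tendsto_log_atTop.comp tendsto_natCast_atTop_atTop).eventually_ge_atTop _
  have hη : TendstoInMeasure μ
      (fun n ω => (σhat n ω / σ - 1) * (cDE n x * Real.sqrt (2 * Real.log n))) atTop 0 := by
    refine tendstoInMeasure_zero_of_abs_le_mul (C := 5 / σ) (by positivity) h2 ?_
    filter_upwards [hlog] with n hn ω
    have hc := abs_cDE_mul_sqrt_le (le_of_max_le_left hn) (le_of_max_le_right hn)
    calc |(σhat n ω / σ - 1) * (cDE n x * Real.sqrt (2 * Real.log n))|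
        = |σ - σhat n ω| / σ * |cDE n x * Real.sqrt (2 * Real.log n)| := by
          rw [abs_mul, div_sub_one hσ.ne', abs_div, abs_of_pos hσ, abs_sub_comm]
      _ ≤ |σ - σhat n ω| / σ * (5 * Real.log n) := by gcongr
      _ = 5 / σ * (|σ - σhat n ω| * Real.log n) := by ring
  have hF : ContinuousAt (fun y => Real.exp (-2 * Real.exp (-y))) x := by fun_prop
  refine (tendsto_measureReal_le_comp_add_of_tendstoInMeasure cDE_monotone hF h1 hη).congr' ?_
  filter_upwards [hlog] with n hn
  simp only [measureReal_def,
    ← mul_cDE_eq_cDE_add (zero_lt_one.trans_le (le_of_max_le_left hn))]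

/-- Extreme-value limit with estimated variance: if `P(a_n ≤ c_n(x)) → exp(−2e^{−x})` for all
`x` and `|σ − σ̂_n|·log n → 0` in probability, then
`P(a_n ≤ (σ̂_n/σ)·c_n(x)) → exp(−2e^{−x})` for all `x`. -/
theorem extreme_value_limit_estimated_variance {Ω : Type*} [MeasurableSpace Ω]
    (μ : Measure Ω) [IsProbabilityMeasure μ]
    (a : ℕ → Ω → ℝ) (ha : ∀ n ω, 0 ≤ a n ω)
    (σ : ℝ) (hσ : 0 < σ) (σhat : ℕ → Ω → ℝ) (hσhat : ∀ n ω, 0 < σhat n ω)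
    (h1 : ∀ x : ℝ, Tendsto (fun n => (μ {ω | a n ω ≤ cDE n x}).toReal) atTop
      (nhds (Real.exp (-2 * Real.exp (-x)))))
    (h2 : ∀ ε : ℝ, 0 < ε →
      Tendsto (fun n => μ {ω | ε ≤ |σ - σhat n ω| * Real.log n}) atTop (nhds 0)) :
    ∀ x : ℝ, Tendsto (fun n => (μ {ω | a n ω ≤ (σhat n ω / σ) * cDE n x}).toReal) atTop
      (nhds (Real.exp (-2 * Real.exp (-x)))) :=
  extreme_value_limit_estimated_variance_general μ a σ hσ σhat h1 h2
end
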